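/- Let λ > 0 and let 𝔤 be the 3-dimensional solvable Lie algebra with orthonormal basis {x₁,x₂,x₃} (with respect to an inner product ⟨·,·⟩) and brackets [x₁,x₂] = x₂ + λ x₃, [x₁,x₃] = x₃. Then the Ricci operator Ric of ⟨·,·⟩ does not belong to ℝ·id ⊕ Der(𝔤); that is, ⟨·,·⟩ is not a solvsoliton. -/
import Mathlib


open Matrix

noncomputable section

/-- standard basis of ℝ³ -/
def e (i : Fin 3) : Fin 3 → ℝ := Pi.single i 1

/-- standard inner product on ℝ³ (the basis `e` is orthonormal) -/
def dotp (x y : Fin 3 → ℝ) : ℝ := ∑ i, x i * y i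

/-- Levi-Civita connection of the metric Lie algebra (ℝ³, br, dotp), via
    2⟨∇_X Y, Z⟩ = ⟨[Z,X],Y⟩ + ⟨X,[Z,Y]⟩ + ⟨[X,Y],Z⟩. -/
def nabla (br : (Fin 3 → ℝ) → (Fin 3 → ℝ) → (Fin 3 → ℝ)) (X Y : Fin 3 → ℝ) :
    Fin 3 → ℝ :=
  fun k => (1/2) * (dotp (br (e k) X) Y + dotp X (br (e k) Y) + dotp (br X Y) (e k))

/-- Riemannian curvature R(X,Y)Z = ∇_X∇_Y Z - ∇_Y∇_X Z - ∇_{[X,Y]}Z. -/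
def curv (br : (Fin 3 → ℝ) → (Fin 3 → ℝ) → (Fin 3 → ℝ)) (X Y Z : Fin 3 → ℝ) :
    Fin 3 → ℝ :=
  nabla br X (nabla br Y Z) - nabla br Y (nabla br X Z) - nabla br (br X Y) Z

/-- Ricci operator Ric(X) = Σᵢ R(X,eᵢ)eᵢ. -/
def ric (br : (Fin 3 → ℝ) → (Fin 3 → ℝ) → (Fin 3 → ℝ)) (X : Fin 3 → ℝ) :
    Fin 3 → ℝ :=
  ∑ i, curv br X (e i) (e i)

/-- The bracket with [x₁,x₂] = x₂ + λ x₃, [x₁,x₃] = x₃, [x₂,x₃] = 0. -/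
def brR3 (l : ℝ) (x y : Fin 3 → ℝ) : Fin 3 → ℝ :=
  ![0,
    x 0 * y 1 - x 1 * y 0,
    l * (x 0 * y 1 - x 1 * y 0) + (x 0 * y 2 - x 2 * y 0)]

set_option maxHeartbeats 2000000 in
/-- On 𝔯₃ the Ricci operator never lies in ℝ·id ⊕ Der(𝔤):
    the metric is not a solvsoliton. -/
theorem r3_not_solvsoliton (l : ℝ) (hl : 0 < l) :
    ¬ ∃ (c : ℝ) (D : Matrix (Fin 3) (Fin 3) ℝ),
      (∀ x y, D.mulVec (brR3 l x y) =
        brR3 l (D.mulVec x) y + brR3 l x (D.mulVec y)) ∧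
      ∀ i : Fin 3, ric (brR3 l) (e i) = c • e i + D.mulVec (e i) := by
  rintro ⟨c, D, hD, hric⟩
  have h00 := congrFun (hric 0) 0
  have h11 := congrFun (hric 1) 1
  have h21 := congrFun (hric 1) 2
  have h12 := congrFun (hric 2) 1
  have h22 := congrFun (hric 2) 2
  have h01 := congrFun (hric 1) 0
  have h02 := congrFun (hric 2) 0
  have h10 := congrFun (hric 0) 1
  have h20 := congrFun (hric 0) 2
  have hd1 := congrFun (hD (e 0) (e 1)) 1
  have hd2 := congrFun (hD (e 0) (e 1)) 2
  simp only [ric, curv, nabla, dotp, brR3, e, Fin.sum_univ_three, Finset.sum_apply,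
    Pi.sub_apply, Pi.add_apply, Pi.smul_apply, smul_eq_mul, Matrix.mulVec,
    dotProduct, Pi.single_apply, Matrix.cons_val_zero, Matrix.cons_val_one,
    Matrix.head_cons, Matrix.cons_val_two, Matrix.tail_cons, Fin.reduceEq,
    reduceIte] at h00 h11 h21 h12 h22 h01 h02 h10 h20 hd1 hd2
  ring_nf at h00 h11 h21 h12 h22 h01 h02 h10 h20 hd1 hd2
  nlinarith [mul_pos hl hl, sq_nonneg l, hl.le, hd1, hd2]
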